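/- arXiv:1309.5067 — 3 statements merged into one kernel-verified Lean document; each statement's English description precedes it below -/
import Mathlib

section
/- For a real invertible 3×3 matrix M, all eigenvalues of M have strictly negative real part if and only if det(M) < 0, tr(M) < 0, and tr(M)·tr(M⁻¹) > 1. -/
/-!
A real cubic has a real root `ρ` (real irreducible polynomials have degree at most two), so the
characteristic polynomial of `M` factors as `(X - ρ) (X² + s X + t)` over `ℝ`. The complex roots
of a real monic quadratic all lie in the open left half-plane iff `s > 0` and `t > 0`. Reading off
`tr M = ρ - s`, `tr (adj M) = t - ρ s`, `det M = ρ t` and `tr M⁻¹ = tr (adj M) / det M`, the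
identity `det M - tr M · tr (adj M) = s (ρ (ρ - s) + t)` turns `ρ < 0 ∧ s > 0 ∧ t > 0` into the
stated inequalities.
-/

/-- A real square matrix is Hurwitz if every complex eigenvalue has
strictly negative real part. -/
def IsHurwitz {n : ℕ} (M : Matrix (Fin n) (Fin n) ℝ) : Prop :=
  ∀ μ ∈ spectrum ℂ (M.map (algebraMap ℝ ℂ)), μ.re < 0

open Polynomial

theorem Polynomial.IsMonicOfDegree.exists_isRoot_of_odd {p : ℝ[X]} {n : ℕ}
    (hp : IsMonicOfDegree p (2 * n + 1)) : ∃ x, p.IsRoot x := by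
  induction n generalizing p with
  | zero =>
    obtain ⟨r, rfl⟩ := isMonicOfDegree_one_iff.mp hp
    exact ⟨-r, by simp⟩
  | succ n ih =>
    obtain ⟨q, f, -, hf, rfl⟩ := eq_isMonicOfDegree_two_mul_isMonicOfDegree (n := 2 * n + 1)
      (by rwa [show 2 * n + 1 + 2 = 2 * (n + 1) + 1 by ring])
    obtain ⟨x, hx⟩ := ih hf
    exact ⟨x, hx.dvd (dvd_mul_left f q)⟩

theorem Real.exists_cubic_eq_zero (a c d : ℝ) : ∃ ρ : ℝ, ρ ^ 3 - a * ρ ^ 2 + c * ρ - d = 0 := by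
  have hp : IsMonicOfDegree (X ^ 3 - C a * X ^ 2 + C c * X - C d) (2 * 1 + 1) := by
    rw [isMonicOfDegree_iff]
    constructor
    · compute_degree
    · simp
  obtain ⟨ρ, hρ⟩ := hp.exists_isRoot_of_odd
  exact ⟨ρ, by simpa using hρ⟩

theorem Complex.re_neg_of_quadratic_eq_zero {s t : ℝ} (hs : 0 < s) (ht : 0 < t) {z : ℂ}
    (hz : z ^ 2 + s * z + t = 0) : z.re < 0 := by
  have hre := congrArg re hz
  have him := congrArg im hz
  simp only [sq, add_re, mul_re, ofReal_re, ofReal_im, add_im, mul_im, zero_re, zero_im] at hre him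
  by_cases hreal : z.im = 0
  · simp only [hreal] at hre
    nlinarith
  · have : 2 * z.re + s = 0 := by
      apply mul_left_cancel₀ hreal
      linear_combination him
    linarith

theorem Complex.exists_quadratic_eq_zero_re_nonneg {s t : ℝ} (h : s ≤ 0 ∨ t ≤ 0) :
    ∃ z : ℂ, z ^ 2 + s * z + t = 0 ∧ 0 ≤ z.re := by
  rcases le_or_gt 0 (s ^ 2 - 4 * t) with hdisc | hdisc
  · refine ⟨((-s + √(s ^ 2 - 4 * t)) / 2 : ℝ), ?_, ?_⟩
    · have : ((-s + √(s ^ 2 - 4 * t)) / 2) ^ 2 + s * ((-s + √(s ^ 2 - 4 * t)) / 2) + t = 0 := by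
        linear_combination (1 / 4 : ℝ) * Real.sq_sqrt hdisc
      exact_mod_cast this
    · have : s ≤ √(s ^ 2 - 4 * t) := by
        rcases h with hs | ht
        · exact hs.trans (Real.sqrt_nonneg _)
        · exact (le_abs_self s).trans (Real.abs_le_sqrt (by linarith))
      simp only [ofReal_re]
      linarith
  · have hs : s ≤ 0 := h.resolve_right fun ht => by nlinarith
    have hsqrt := Real.mul_self_sqrt (by linarith : 0 ≤ 4 * t - s * s)
    refine ⟨⟨-s / 2, √(4 * t - s * s) / 2⟩, Complex.ext ?_ ?_, by simp; linarith⟩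
    · simp only [sq, add_re, mul_re, ofReal_re, ofReal_im, zero_mul, sub_zero, zero_re]
      linear_combination (-1 / 4 : ℝ) * hsqrt
    · simp only [sq, add_im, mul_im, ofReal_re, ofReal_im, zero_mul, add_zero, zero_im]
      ring

theorem Complex.forall_quadratic_eq_zero_re_neg_iff (s t : ℝ) :
    (∀ z : ℂ, z ^ 2 + s * z + t = 0 → z.re < 0) ↔ 0 < s ∧ 0 < t := by
  refine ⟨fun h => ?_, fun ⟨hs, ht⟩ _ => re_neg_of_quadratic_eq_zero hs ht⟩
  by_contra hst
  obtain ⟨z, hz, hre⟩ :=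
    exists_quadratic_eq_zero_re_nonneg (by simpa only [not_and_or, not_lt] using hst)
  exact (h z hz).not_ge hre

theorem Real.factor_signs_iff_routhHurwitz (ρ s t : ℝ) :
    ρ < 0 ∧ 0 < s ∧ 0 < t ↔ ρ * t < 0 ∧ ρ - s < 0 ∧ (ρ - s) * (t - ρ * s) < ρ * t := by
  have key : ρ * t - (ρ - s) * (t - ρ * s) = s * (ρ * (ρ - s) + t) := by ring
  constructor
  · rintro ⟨hρ, hs, ht⟩
    have : 0 < ρ * (ρ - s) := mul_pos_of_neg_of_neg hρ (by linarith)
    exact ⟨mul_neg_of_neg_of_pos hρ ht, by linarith, by nlinarith⟩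
  · rintro ⟨hd, ha, hac⟩
    have hpos : 0 < s * (ρ * (ρ - s) + t) := by linarith
    have hρ : ρ < 0 := by
      by_contra! hρ
      have ht : t < 0 := by nlinarith
      nlinarith [mul_nonpos_of_nonneg_of_nonpos hρ ha.le]
    have ht : 0 < t := by nlinarith
    refine ⟨hρ, ?_, ht⟩
    by_contra! hs
    nlinarith [mul_pos_of_neg_of_neg hρ ha]

theorem Complex.forall_cubic_eq_zero_re_neg_iff (a c d : ℝ) :
    (∀ z : ℂ, z ^ 3 - a * z ^ 2 + c * z - d = 0 → z.re < 0) ↔ d < 0 ∧ a < 0 ∧ a * c < d := by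
  obtain ⟨ρ, hρ⟩ := Real.exists_cubic_eq_zero a c d
  obtain ⟨s, t, rfl, rfl, rfl⟩ : ∃ s t : ℝ, a = ρ - s ∧ c = t - ρ * s ∧ d = ρ * t :=
    ⟨ρ - a, c + ρ * (ρ - a), by ring, by ring, by linear_combination -hρ⟩
  have hfactor (z : ℂ) : z ^ 3 - ↑(ρ - s) * z ^ 2 + ↑(t - ρ * s) * z - ↑(ρ * t) =
      (z - ρ) * (z ^ 2 + s * z + t) := by
    push_cast
    ring
  simp only [hfactor, mul_eq_zero, sub_eq_zero, or_imp, forall_and, forall_eq, ofReal_re,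
    forall_quadratic_eq_zero_re_neg_iff]
  exact Real.factor_signs_iff_routhHurwitz ρ s t

theorem Matrix.charpoly_fin_three {R : Type*} [CommRing R] (M : Matrix (Fin 3) (Fin 3) R) :
    M.charpoly = X ^ 3 - C M.trace * X ^ 2 + C M.adjugate.trace * X - C M.det := by
  rw [charpoly, det_fin_three, trace_fin_three, det_fin_three, adjugate_fin_three, trace_fin_three]
  simp only [Fin.isValue, charmatrix_apply_eq, ne_eq, Fin.reduceEq, not_false_eq_true,
    charmatrix_apply_ne, mul_neg, neg_mul, neg_neg, zero_ne_one, one_ne_zero, map_add, of_apply,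
    cons_val', cons_val_zero, cons_val_fin_one, cons_val_one, cons_val, map_sub, map_mul]
  ring

theorem Matrix.trace_inv {n K : Type*} [Fintype n] [DecidableEq n] [Field K] (M : Matrix n n K) :
    M⁻¹.trace = M.det⁻¹ * M.adjugate.trace := by
  rw [inv_def, trace_smul, Ring.inverse_eq_inv', smul_eq_mul]

theorem isHurwitz_iff_forall_aeval_charpoly {n : ℕ} (M : Matrix (Fin n) (Fin n) ℝ) :
    IsHurwitz M ↔ ∀ μ : ℂ, aeval μ M.charpoly = 0 → μ.re < 0 := by
  simp only [IsHurwitz, Matrix.mem_spectrum_iff_isRoot_charpoly, Matrix.charpoly_map, IsRoot.def,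
    eval_map_algebraMap]

theorem hurwitz_three_iff_general (M : Matrix (Fin 3) (Fin 3) ℝ) :
    IsHurwitz M ↔ M.det < 0 ∧ M.trace < 0 ∧ 1 < M.trace * (M⁻¹).trace := by
  rw [isHurwitz_iff_forall_aeval_charpoly, M.charpoly_fin_three]
  simp only [map_sub, map_add, map_mul, map_pow, aeval_X, aeval_C, Complex.coe_algebraMap]
  rw [Complex.forall_cubic_eq_zero_re_neg_iff, M.trace_inv]
  refine and_congr_right fun hdet => and_congr_right fun _ => ?_
  rw [mul_left_comm, ← div_eq_inv_mul, one_lt_div_of_neg hdet]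

theorem hurwitz_three_iff (M : Matrix (Fin 3) (Fin 3) ℝ) (hdet : M.det ≠ 0) :
    IsHurwitz M ↔ M.det < 0 ∧ M.trace < 0 ∧ 1 < M.trace * (M⁻¹).trace :=
  hurwitz_three_iff_general M
end

section
/- Let A be a 3×3 real invertible matrix and B = A⁻¹. If every diagonal entry of B is zero, then for every diagonal matrix D = diag(c₁,c₂,c₃), the matrix DA is not Hurwitz. -/
open Matrix

theorem Matrix.nonsing_inv_map {ι K L : Type*} [Fintype ι] [DecidableEq ι] [Field K] [Field L]
    (f : K →+* L) (M : Matrix ι ι K) : (M.map f)⁻¹ = M⁻¹.map f := by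
  have hdet : (M.map f).det = f M.det := (RingHom.map_det f M).symm
  have hadj : (M.map f).adjugate = M.adjugate.map f := (RingHom.map_adjugate f M).symm
  ext i j
  simp [inv_def, Ring.inverse_eq_inv', hdet, hadj]

theorem Matrix.trace_inv_diagonal_mul_eq_zero {ι K : Type*} [Fintype ι] [DecidableEq ι] [Field K]
    {A : Matrix ι ι K} (hdiag : ∀ i, A⁻¹ i i = 0) (c : ι → K) :
    (diagonal c * A)⁻¹.trace = 0 := by
  simp [mul_inv_rev, inv_diagonal, trace, mul_diagonal, hdiag]

namespace IsHurwitz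

variable {n : ℕ} {M : Matrix (Fin n) (Fin n) ℝ}

theorem isUnit_map (hM : IsHurwitz M) : IsUnit (M.map (algebraMap ℝ ℂ)) := by
  by_contra h
  simpa using hM 0 ((spectrum.zero_mem_iff ℂ).mpr h)

theorem inv (hM : IsHurwitz M) : IsHurwitz M⁻¹ := by
  intro μ hμ
  obtain ⟨u, hu⟩ := hM.isUnit_map
  rw [← nonsing_inv_map, ← hu, ← coe_units_inv] at hμ
  have hμ0 : μ ≠ 0 := by
    rintro rfl
    exact (spectrum.zero_mem_iff ℂ).mp hμ (u⁻¹).isUnit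
  have hre : (μ⁻¹).re < 0 := hM _ (hu ▸ spectrum.inv₀_mem_iff.mpr hμ)
  rw [Complex.inv_re] at hre
  simpa using (div_lt_iff₀ (Complex.normSq_pos.mpr hμ0)).mp hre

theorem trace_neg [NeZero n] (hM : IsHurwitz M) : M.trace < 0 := by
  set N := M.map (algebraMap ℝ ℂ)
  have hroots : N.charpoly.roots ≠ 0 := by
    rw [← Multiset.card_pos, ← (IsAlgClosed.splits N.charpoly).natDegree_eq_card_roots,
      charpoly_natDegree_eq_dim, Fintype.card_fin]
    exact Nat.pos_of_neZero n
  have htrace : M.trace = (N.charpoly.roots.map Complex.re).sum := by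
    rw [← Complex.coe_reAddGroupHom, ← map_multiset_sum, ← trace_eq_sum_roots_charpoly,
      ← AddMonoidHom.map_trace]
    simp
  rw [htrace]
  simpa using Multiset.sum_lt_sum_of_nonempty (g := 0) hroots
    fun μ hμ => hM μ (mem_spectrum_of_isRoot_charpoly (Polynomial.isRoot_of_mem_roots hμ))

end IsHurwitz

theorem no_fully_distributed_coordination_of_zero_diag_inverse_general
    (A : Matrix (Fin 3) (Fin 3) ℝ)
    (hdiag : ∀ i, A⁻¹ i i = 0) :
    ∀ c : Fin 3 → ℝ, ¬ IsHurwitz (Matrix.diagonal c * A) :=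
  fun c hH => hH.inv.trace_neg.ne (trace_inv_diagonal_mul_eq_zero hdiag c)

theorem no_fully_distributed_coordination_of_zero_diag_inverse
    (A : Matrix (Fin 3) (Fin 3) ℝ) (hdet : A.det ≠ 0)
    (hdiag : ∀ i, A⁻¹ i i = 0) :
    ∀ c : Fin 3 → ℝ, ¬ IsHurwitz (Matrix.diagonal c * A) :=
  no_fully_distributed_coordination_of_zero_diag_inverse_general A hdiag
end

section
/- Let A be a 3×3 real invertible matrix with A₁₁ < 0, and B = A⁻¹ with B₂₂ ≠ 0. Choose real c₂, c₃ with B₂₂/c₂ + B₃₃/c₃ < 0 and c₂c₃·det(A) < 0. Then there exists ε₀ > 0 such that for all 0 < ε < ε₀, the matrix diag(1, εc₂, εc₃)·A is Hurwitz. -/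
open Filter Topology Matrix

namespace Matrix

theorem det_algebraMap_sub_map_fin_three {R S : Type*} [CommRing R] [CommRing S] [Algebra R S]
    (M : Matrix (Fin 3) (Fin 3) R) (μ : S) :
    (algebraMap S (Matrix (Fin 3) (Fin 3) S) μ - M.map (algebraMap R S)).det =
      μ ^ 3 - algebraMap R S M.trace * μ ^ 2 + algebraMap R S M.adjugate.trace * μ -
        algebraMap R S M.det := by
  simp only [algebraMap_eq_diagonal, det_fin_three, sub_apply, diagonal_apply_eq,
    Pi.algebraMap_apply, Algebra.algebraMap_self, RingHom.id_apply, map_apply, ne_eq,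
    Fin.reduceEq, not_false_eq_true, diagonal_apply_ne, trace_fin_three, adjugate_fin_three,
    of_apply, cons_val', cons_val_zero, cons_val_fin_one, cons_val_one, cons_val, map_add,
    map_sub, map_mul]
  ring

theorem det_diagonal_mul_fin_three {R : Type*} [CommRing R] (a b c : R)
    (A : Matrix (Fin 3) (Fin 3) R) : (diagonal ![a, b, c] * A).det = a * b * c * A.det := by
  simp [det_mul, Fin.prod_univ_three]

theorem trace_diagonal_mul_fin_three {R : Type*} [CommRing R] (a b c : R)
    (A : Matrix (Fin 3) (Fin 3) R) :
    (diagonal ![a, b, c] * A).trace = a * A 0 0 + b * A 1 1 + c * A 2 2 := by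
  simp [trace_fin_three]

theorem trace_inv_diagonal_mul_fin_three {K : Type*} [Field K] {a b c : K} (ha : a ≠ 0)
    (hb : b ≠ 0) (hc : c ≠ 0) (A : Matrix (Fin 3) (Fin 3) K) :
    (diagonal ![a, b, c] * A)⁻¹.trace = A⁻¹ 0 0 / a + A⁻¹ 1 1 / b + A⁻¹ 2 2 / c := by
  have hinv : (diagonal ![a, b, c])⁻¹ = diagonal ![a⁻¹, b⁻¹, c⁻¹] := by
    refine inv_eq_left_inv ?_
    rw [diagonal_mul_diagonal, ← diagonal_one]
    congr 1
    ext i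
    fin_cases i <;> simp [ha, hb, hc]
  rw [Matrix.mul_inv_rev, hinv]
  simp [trace_fin_three, div_eq_mul_inv]

end Matrix

theorem re_neg_of_cubic_eq_zero {a₂ a₁ a₀ : ℝ} (h₂ : 0 < a₂) (h₁ : 0 < a₁) (h₀ : 0 < a₀)
    (hRH : a₀ < a₂ * a₁) {μ : ℂ} (hμ : μ ^ 3 + a₂ * μ ^ 2 + a₁ * μ + a₀ = 0) : μ.re < 0 := by
  obtain ⟨x, y⟩ := μ
  obtain ⟨hre, him⟩ := Complex.ext_iff.1 hμ
  simp only [pow_succ, pow_zero, one_mul, Complex.add_re, Complex.add_im, Complex.mul_re,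
    Complex.mul_im, Complex.ofReal_re, Complex.ofReal_im, Complex.zero_re, Complex.zero_im,
    zero_mul, sub_zero, add_zero] at hre him
  change x < 0
  by_contra! hx
  rcases eq_or_ne y 0 with rfl | hy
  · nlinarith [pow_nonneg hx 3, mul_nonneg (mul_nonneg h₂.le hx) hx, mul_nonneg h₁.le hx]
  · have him' : 3 * x ^ 2 - y ^ 2 + 2 * a₂ * x + a₁ = 0 := by
      apply mul_left_cancel₀ hy
      linear_combination him
    -- eliminating `y ^ 2` leaves a cubic in `x` whose coefficients are all positive
    have hcubic : 8 * x ^ 3 + 8 * a₂ * x ^ 2 + 2 * (a₁ + a₂ ^ 2) * x + (a₂ * a₁ - a₀) = 0 := by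
      linear_combination -hre + (3 * x + a₂) * him'
    nlinarith [pow_nonneg hx 3, mul_nonneg (mul_nonneg h₂.le hx) hx, mul_nonneg h₁.le hx,
      mul_nonneg (mul_nonneg h₂.le h₂.le) hx]

theorem isHurwitz_fin_three_of_routh_hurwitz {M : Matrix (Fin 3) (Fin 3) ℝ} (hdet : M.det < 0)
    (htr : M.trace < 0) (hRH : 1 < M.trace * M⁻¹.trace) : IsHurwitz M := by
  have hadj : M.adjugate.trace = M.det * M⁻¹.trace := by
    rw [inv_def, trace_smul, Ring.inverse_eq_inv, smul_eq_mul, mul_inv_cancel_left₀ hdet.ne]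
  intro μ hμ
  rw [spectrum.mem_iff, isUnit_iff_isUnit_det, isUnit_iff_ne_zero, not_not,
    det_algebraMap_sub_map_fin_three] at hμ
  refine re_neg_of_cubic_eq_zero (a₂ := -M.trace) (a₁ := M.adjugate.trace) (a₀ := -M.det)
    (by linarith) ?_ (by linarith) ?_ ?_
  · rw [hadj]; nlinarith
  · rw [hadj]; nlinarith
  · rw [← hμ, Complex.coe_algebraMap]; push_cast; ring

theorem tendsto_trace_mul_trace_inv_diagonal_mul_fin_three {A : Matrix (Fin 3) (Fin 3) ℝ}
    {c₂ c₃ : ℝ} (hc₂ : c₂ ≠ 0) (hc₃ : c₃ ≠ 0) (h11 : A 0 0 < 0)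
    (hc : A⁻¹ 1 1 / c₂ + A⁻¹ 2 2 / c₃ < 0) :
    Tendsto (fun ε : ℝ => (diagonal ![1, ε * c₂, ε * c₃] * A).trace *
      (diagonal ![1, ε * c₂, ε * c₃] * A)⁻¹.trace) (𝓝[>] 0) atTop := by
  set s := A⁻¹ 1 1 / c₂ + A⁻¹ 2 2 / c₃
  have hlim : Tendsto (fun ε : ℝ => (A 0 0 + ε * (c₂ * A 1 1 + c₃ * A 2 2)) * (ε * A⁻¹ 0 0 + s))
      (𝓝[>] 0) (𝓝 (A 0 0 * s)) := by
    apply tendsto_nhdsWithin_of_tendsto_nhds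
    simpa using ((by fun_prop : Continuous fun ε : ℝ =>
      (A 0 0 + ε * (c₂ * A 1 1 + c₃ * A 2 2)) * (ε * A⁻¹ 0 0 + s)).tendsto 0)
  refine (tendsto_inv_nhdsGT_zero.atTop_mul_pos (mul_pos_of_neg_of_neg h11 hc) hlim).congr' ?_
  filter_upwards [self_mem_nhdsWithin] with ε (hε : 0 < ε)
  rw [trace_diagonal_mul_fin_three, trace_inv_diagonal_mul_fin_three one_ne_zero
    (mul_ne_zero hε.ne' hc₂) (mul_ne_zero hε.ne' hc₃)]
  simp only [s]
  field_simp
  ring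

theorem fully_distributed_coordination_three_general
    (A : Matrix (Fin 3) (Fin 3) ℝ)
    (h11 : A 0 0 < 0)
    (c₂ c₃ : ℝ)
    (hc : A⁻¹ 1 1 / c₂ + A⁻¹ 2 2 / c₃ < 0)
    (hcdet : c₂ * c₃ * A.det < 0) :
    ∃ ε₀ > 0, ∀ ε : ℝ, 0 < ε → ε < ε₀ →
      IsHurwitz (Matrix.diagonal ![1, ε * c₂, ε * c₃] * A) := by
  suffices ∀ᶠ ε in 𝓝[>] 0, IsHurwitz (diagonal ![1, ε * c₂, ε * c₃] * A) by
    obtain ⟨ε₀, hε₀, hsub⟩ := mem_nhdsGT_iff_exists_Ioo_subset.1 this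
    exact ⟨ε₀, hε₀, fun ε h0 h1 => hsub ⟨h0, h1⟩⟩
  have hc₂ : c₂ ≠ 0 := by rintro rfl; simp at hcdet
  have hc₃ : c₃ ≠ 0 := by rintro rfl; simp at hcdet
  have htr : Tendsto (fun ε : ℝ => (diagonal ![1, ε * c₂, ε * c₃] * A).trace) (𝓝[>] 0)
      (𝓝 (A 0 0)) := by
    simp only [trace_diagonal_mul_fin_three]
    apply tendsto_nhdsWithin_of_tendsto_nhds
    simpa using ((by fun_prop : Continuous fun ε : ℝ =>
      1 * A 0 0 + ε * c₂ * A 1 1 + ε * c₃ * A 2 2).tendsto 0)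
  filter_upwards [self_mem_nhdsWithin, htr.eventually (gt_mem_nhds h11),
    (tendsto_trace_mul_trace_inv_diagonal_mul_fin_three hc₂ hc₃ h11 hc).eventually_gt_atTop 1]
    with ε (hε : 0 < ε) htrε hRH
  refine isHurwitz_fin_three_of_routh_hurwitz ?_ htrε hRH
  rw [det_diagonal_mul_fin_three]
  nlinarith [sq_pos_of_pos hε]

theorem fully_distributed_coordination_three
    (A : Matrix (Fin 3) (Fin 3) ℝ) (hdet : A.det ≠ 0)
    (h11 : A 0 0 < 0) (hB22 : A⁻¹ 1 1 ≠ 0)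
    (c₂ c₃ : ℝ)
    (hc : A⁻¹ 1 1 / c₂ + A⁻¹ 2 2 / c₃ < 0)
    (hcdet : c₂ * c₃ * A.det < 0) :
    ∃ ε₀ > 0, ∀ ε : ℝ, 0 < ε → ε < ε₀ →
      IsHurwitz (Matrix.diagonal ![1, ε * c₂, ε * c₃] * A) :=
  fully_distributed_coordination_three_general A h11 c₂ c₃ hc hcdet
end
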